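/- arXiv:2208.08951 — 3 statements merged into one kernel-verified Lean document; each statement's English description precedes it below -/
import Mathlib

section
/- Let K be an algebraically closed field and let f = x_1^{A_1}⋯x_r^{A_r} − λ y_1^{B_1}⋯y_s^{B_s} be a pure binomial with λ ∈ K^×, where x_i, y_j are distinct variables. Then f is nonreduced (i.e., f generates a non-radical ideal in K[x,y]) if and only if char K = p > 0 and p divides all exponents A_1,…,A_r,B_1,…,B_s. -/
open MvPolynomial

section AuxLemmas

variable {K : Type*} [Field K]

/-- Each variable is prime in the multivariate polynomial ring over a field. -/
lemma aux_prime_X {σ : Type*} (k : σ) : Prime (X k : MvPolynomial σ K) := by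
  classical
  let e : MvPolynomial σ K ≃+* Polynomial (MvPolynomial {b : σ // b ≠ k} K) :=
    ((renameEquiv K (Equiv.optionSubtypeNe k).symm).trans
      (optionEquivLeft K {b : σ // b ≠ k})).toRingEquiv
  have he : e (X k) = Polynomial.X := by
    simp only [e, AlgEquiv.toRingEquiv_eq_coe, AlgEquiv.coe_ringEquiv, AlgEquiv.trans_apply,
      renameEquiv_apply, rename_X, Equiv.optionSubtypeNe_symm_self, optionEquivLeft_X_none]
  rw [← MulEquiv.prime_iff e.toMulEquiv]
  rw [show e.toMulEquiv (X k) = e (X k) from rfl, he]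
  exact Polynomial.prime_X

lemma aux_prod {σ ι : Type*} [Fintype ι] (g : ι → σ) (E : ι → ℕ) :
    (∏ i, (X (g i) : MvPolynomial σ K) ^ E i)
      = monomial (∑ i, Finsupp.single (g i) (E i)) 1 := by
  rw [monomial_sum_one]
  simp_rw [X_pow_eq_monomial]

lemma aux_apply_eq {σ ι : Type*} [Fintype ι] [DecidableEq ι] [DecidableEq σ] (g : ι → σ)
    (hg : Function.Injective g) (E : ι → ℕ) (i : ι) :
    (∑ i', Finsupp.single (g i') (E i')) (g i) = E i := by
  rw [Finsupp.finset_sum_apply]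
  rw [Finset.sum_eq_single i (fun b _ hb => by
    rw [Finsupp.single_apply, if_neg (fun h => hb (hg h))]) (by simp)]
  simp [Finsupp.single_apply]

lemma aux_apply_ne {σ ι : Type*} [Fintype ι] (g : ι → σ) (E : ι → ℕ) (x : σ)
    (hx : ∀ i, g i ≠ x) : (∑ i', Finsupp.single (g i') (E i')) x = 0 := by
  classical
  rw [Finsupp.finset_sum_apply]
  exact Finset.sum_eq_zero fun i _ => by rw [Finsupp.single_apply, if_neg (hx i)]

lemma aux_no_common_prime {σ : Type*} (a b : σ →₀ ℕ)
    (hdisj : ∀ x, a x = 0 ∨ b x = 0) (q : MvPolynomial σ K) (hq : Prime q)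
    (h1 : q ∣ monomial a 1) (h2 : q ∣ monomial b 1) : False := by
  classical
  rw [← prod_X_pow_eq_monomial] at h1
  obtain ⟨x, hx, hdvd⟩ := hq.exists_mem_finset_dvd h1
  have hqx : q ∣ X x := hq.dvd_of_dvd_pow hdvd
  obtain ⟨c, hc⟩ := hqx
  rcases (aux_prime_X (K := K) x).irreducible.isUnit_or_isUnit hc with h | h
  · exact hq.not_unit h
  · have hxq : X x ∣ q := ⟨↑h.unit⁻¹, by
      rw [hc, mul_assoc, h.mul_val_inv, mul_one]⟩
    have := X_dvd_monomial.mp (hxq.trans h2)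
    have hax : a x ≠ 0 := Finsupp.mem_support_iff.mp hx
    have hbx : b x = 0 := (hdisj x).resolve_left hax
    rcases this with h' | h'
    · exact one_ne_zero h'
    · exact h' hbx

variable [IsAlgClosed K]

lemma aux_not_unit {r s : ℕ} (hrs : 0 < r + s) (A : Fin r → ℕ) (B : Fin s → ℕ)
    (hA : ∀ i, 0 < A i) (hB : ∀ j, 0 < B j) (c : K) (hc : c ≠ 0) :
    ¬ IsUnit ((∏ i, X (Sum.inl i) ^ A i) - C c * ∏ j, X (Sum.inr j) ^ B j :
      MvPolynomial (Fin r ⊕ Fin s) K) := by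
  classical
  intro hu
  by_cases hr : 0 < r
  · set i0 : Fin r := ⟨0, hr⟩ with hi0
    obtain ⟨t, ht⟩ := IsAlgClosed.exists_pow_nat_eq c (hA i0)
    have hev : eval (Sum.elim (fun i => if i = i0 then t else 1) (fun _ => (1:K)))
        ((∏ i, X (Sum.inl i) ^ A i) - C c * ∏ j, X (Sum.inr j) ^ B j) = 0 := by
      rw [map_sub, map_mul, map_prod, map_prod, eval_C]
      simp only [map_pow, eval_X, Sum.elim_inl, Sum.elim_inr, one_pow,
        Finset.prod_const_one, mul_one]
      rw [Finset.prod_eq_single i0 (fun b _ hb => by simp [hb]) (by simp)]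
      simp [ht]
    have := hu.map (eval (Sum.elim (fun i => if i = i0 then t else 1) (fun _ => (1:K))))
    rw [hev] at this
    exact one_ne_zero (isUnit_zero_iff.mp this).symm
  · have hs : 0 < s := by omega
    set j0 : Fin s := ⟨0, hs⟩ with hj0
    obtain ⟨t, ht⟩ := IsAlgClosed.exists_pow_nat_eq c⁻¹ (hB j0)
    have hev : eval (Sum.elim (fun _ => (1:K)) (fun j => if j = j0 then t else 1))
        ((∏ i, X (Sum.inl i) ^ A i) - C c * ∏ j, X (Sum.inr j) ^ B j) = 0 := by
      rw [map_sub, map_mul, map_prod, map_prod, eval_C]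
      simp only [map_pow, eval_X, Sum.elim_inl, Sum.elim_inr, one_pow,
        Finset.prod_const_one, one_mul]
      rw [Finset.prod_eq_single j0 (fun b _ hb => by simp [hb]) (by simp)]
      simp [ht, mul_inv_cancel₀ hc]
    have := hu.map (eval (Sum.elim (fun _ => (1:K)) (fun j => if j = j0 then t else 1)))
    rw [hev] at this
    exact one_ne_zero (isUnit_zero_iff.mp this).symm

end AuxLemmas

/-- The pure binomial `f = x^A - λ y^B` over an algebraically closed field `K`
generates a non-radical ideal (i.e. `V(f)` is nonreduced) iff `char K = p > 0`
divides all the exponents `A_i, B_j`. -/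
theorem stmt0 {K : Type*} [Field K] [IsAlgClosed K]
    (r s : ℕ) (hrs : 0 < r + s)
    (A : Fin r → ℕ) (B : Fin s → ℕ)
    (hA : ∀ i, 0 < A i) (hB : ∀ j, 0 < B j)
    (lam : K) (hlam : lam ≠ 0)
    (f : MvPolynomial (Fin r ⊕ Fin s) K)
    (hf : f = (∏ i, X (Sum.inl i) ^ A i) - C lam * ∏ j, X (Sum.inr j) ^ B j) :
    ¬ (Ideal.span {f}).IsRadical ↔
      (ringChar K ≠ 0 ∧ (∀ i, ringChar K ∣ A i) ∧ ∀ j, ringChar K ∣ B j) := by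
  classical
  haveI : CharP K (ringChar K) := ringChar.charP K
  set p := ringChar K with hpdef
  set dA : (Fin r ⊕ Fin s) →₀ ℕ := ∑ i, Finsupp.single (Sum.inl i) (A i) with hdA
  set dB : (Fin r ⊕ Fin s) →₀ ℕ := ∑ j, Finsupp.single (Sum.inr j) (B j) with hdB
  have hfA : (∏ i, (X (Sum.inl i) : MvPolynomial (Fin r ⊕ Fin s) K) ^ A i) = monomial dA 1 :=
    aux_prod _ _
  have hfB : (∏ j, (X (Sum.inr j) : MvPolynomial (Fin r ⊕ Fin s) K) ^ B j) = monomial dB 1 :=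
    aux_prod _ _
  have hdisj : ∀ x, dA x = 0 ∨ dB x = 0 := by
    rintro (i | j)
    · exact Or.inr (aux_apply_ne _ _ _ (fun j => by simp))
    · exact Or.inl (aux_apply_ne _ _ _ (fun i => by simp))
  have hABne : dA ≠ dB := by
    intro h
    by_cases hr : 0 < r
    · have h1 : dA (Sum.inl ⟨0, hr⟩) = A ⟨0, hr⟩ := aux_apply_eq _ Sum.inl_injective _ _
      have h2 : dB (Sum.inl ⟨0, hr⟩) = 0 := aux_apply_ne _ _ _ (fun j => by simp)
      rw [h, h2] at h1
      exact (hA _).ne h1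
    · have hs : 0 < s := by omega
      have h1 : dB (Sum.inr ⟨0, hs⟩) = B ⟨0, hs⟩ := aux_apply_eq _ Sum.inr_injective _ _
      have h2 : dA (Sum.inr ⟨0, hs⟩) = 0 := aux_apply_ne _ _ _ (fun i => by simp)
      rw [← h, h2] at h1
      exact (hB _).ne h1
  have hco : coeff dA f = 1 := by
    rw [hf, hfA, hfB, coeff_sub, C_mul_monomial, mul_one, coeff_monomial, if_pos rfl,
      coeff_monomial, if_neg (Ne.symm hABne), sub_zero]
  have hf0 : f ≠ 0 := by
    intro h0
    rw [h0, coeff_zero] at hco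
    exact zero_ne_one hco
  rw [← isRadical_iff_span_singleton, isRadical_iff_squarefree_of_ne_zero hf0]
  constructor
  · -- ¬ Squarefree f → char divides everything (by contradiction)
    intro hns
    by_contra hcon
    apply hns
    have hcase : (∃ i, ((A i : K)) ≠ 0) ∨ (∃ j, ((B j : K)) ≠ 0) := by
      by_cases hp : p = 0
      · haveI : CharP K 0 := hp ▸ (inferInstance : CharP K p)
        haveI : CharZero K := CharP.charP_to_charZero K
        by_cases hr : 0 < r
        · exact Or.inl ⟨⟨0, hr⟩, Nat.cast_ne_zero.mpr (hA _).ne'⟩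
        · exact Or.inr ⟨⟨0, by omega⟩, Nat.cast_ne_zero.mpr (hB _).ne'⟩
      · have h2 : ¬((∀ i, p ∣ A i) ∧ (∀ j, p ∣ B j)) := fun h => hcon ⟨hp, h.1, h.2⟩
        rcases not_and_or.mp h2 with h | h
        · push_neg at h
          obtain ⟨i, hi⟩ := h
          exact Or.inl ⟨i, fun h0 => hi ((CharP.cast_eq_zero_iff K p _).mp h0)⟩
        · push_neg at h
          obtain ⟨j, hj⟩ := h
          exact Or.inr ⟨j, fun h0 => hj ((CharP.cast_eq_zero_iff K p _).mp h0)⟩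
    rw [squarefree_iff_no_irreducibles hf0]
    intro q hqirr hqq
    have hq : Prime q := UniqueFactorizationMonoid.irreducible_iff_prime.mp hqirr
    have hqf : q ∣ f := (dvd_mul_right q q).trans hqq
    have hder : ∀ v, q ∣ pderiv v f := by
      intro v
      obtain ⟨h, hh⟩ := hqq
      rw [hh, pderiv_mul, pderiv_mul]
      exact dvd_add (dvd_mul_of_dvd_left (dvd_add (dvd_mul_left q _) (dvd_mul_right q _)) h)
        (dvd_mul_of_dvd_left (dvd_mul_right q q) _)
    have hstrip : ∀ (m : (Fin r ⊕ Fin s) →₀ ℕ) (cc : K), cc ≠ 0 →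
        q ∣ monomial m cc → q ∣ monomial m 1 := by
      intro m cc hcc h
      have h3 := h.mul_left (C cc⁻¹)
      rwa [C_mul_monomial, inv_mul_cancel₀ hcc] at h3
    -- In either case we get that q divides both pure monomials
    have hboth : q ∣ monomial dA 1 ∧ q ∣ monomial dB 1 := by
      rcases hcase with ⟨i, hi⟩ | ⟨j, hj⟩
      · -- use the derivative in direction `inl i`
        set v : Fin r ⊕ Fin s := Sum.inl i with hv
        have hdAv : dA v = A i := aux_apply_eq _ Sum.inl_injective _ _
        have hdBv : dB v = 0 := aux_apply_ne _ _ _ (fun j => by simp)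
        have hpd : pderiv v f = monomial (dA - Finsupp.single v 1) ((A i : K)) := by
          rw [hf, hfA, hfB, map_sub, pderiv_C_mul, pderiv_monomial, pderiv_monomial,
            hdAv, hdBv]
          simp
        have h1 : q ∣ monomial (dA - Finsupp.single v 1) (1 : K) :=
          hstrip _ _ hi (hpd ▸ hder v)
        have hqdA : q ∣ monomial dA 1 :=
          h1.trans (monomial_one_dvd_monomial_one.mpr tsub_le_self)
        have hqdB : q ∣ monomial dB 1 := by
          have h2 : q ∣ C lam * monomial dB 1 := by
            have h3 := dvd_sub hqdA hqf
            rw [hf, hfA, hfB, sub_sub_cancel] at h3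
            exact h3
          exact hstrip _ _ hlam (by rwa [C_mul_monomial, mul_one] at h2)
        exact ⟨hqdA, hqdB⟩
      · -- use the derivative in direction `inr j`
        set v : Fin r ⊕ Fin s := Sum.inr j with hv
        have hdBv : dB v = B j := aux_apply_eq _ Sum.inr_injective _ _
        have hdAv : dA v = 0 := aux_apply_ne _ _ _ (fun i => by simp)
        have hpd : pderiv v f = -(monomial (dB - Finsupp.single v 1) (lam * (B j : K))) := by
          rw [hf, hfA, hfB, map_sub, pderiv_C_mul, pderiv_monomial, pderiv_monomial,
            hdAv, hdBv, C_mul_monomial]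
          simp [mul_assoc]
        have hcc : lam * (B j : K) ≠ 0 := mul_ne_zero hlam hj
        have h1 : q ∣ monomial (dB - Finsupp.single v 1) (1 : K) := by
          apply hstrip _ _ hcc
          have h2 := hder v
          rw [hpd, dvd_neg] at h2
          exact h2
        have hqdB : q ∣ monomial dB 1 :=
          h1.trans (monomial_one_dvd_monomial_one.mpr tsub_le_self)
        have hqdA : q ∣ monomial dA 1 := by
          have h3 : (monomial dA 1 : MvPolynomial (Fin r ⊕ Fin s) K)
              = f + C lam * monomial dB 1 := by
            rw [hf, hfA, hfB, sub_add_cancel]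
          rw [h3]
          exact dvd_add hqf (hqdB.mul_left (C lam))
        exact ⟨hqdA, hqdB⟩
    exact (aux_no_common_prime dA dB hdisj q hq hboth.1 hboth.2).elim
  · -- char p divides everything → f = g^p is not squarefree
    rintro ⟨hp0, hpA, hpB⟩ hsq
    haveI hfact : Fact p.Prime := ⟨(CharP.char_is_prime_or_zero K p).resolve_right hp0⟩
    have hppos : 0 < p := Nat.pos_of_ne_zero hp0
    obtain ⟨μ, hμ⟩ := IsAlgClosed.exists_pow_nat_eq lam hppos
    have hμ0 : μ ≠ 0 := fun h => hlam (by rw [← hμ, h, zero_pow hp0])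
    set g : MvPolynomial (Fin r ⊕ Fin s) K :=
      (∏ i, X (Sum.inl i) ^ (A i / p)) - C μ * ∏ j, X (Sum.inr j) ^ (B j / p) with hg
    have hsumA : (p • ∑ i, Finsupp.single (Sum.inl i : Fin r ⊕ Fin s) (A i / p)) = dA := by
      rw [hdA, Finset.smul_sum]
      exact Finset.sum_congr rfl fun i _ => by
        rw [Finsupp.smul_single, smul_eq_mul, Nat.mul_div_cancel' (hpA i)]
    have hsumB : (p • ∑ j, Finsupp.single (Sum.inr j : Fin r ⊕ Fin s) (B j / p)) = dB := by
      rw [hdB, Finset.smul_sum]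
      exact Finset.sum_congr rfl fun j _ => by
        rw [Finsupp.smul_single, smul_eq_mul, Nat.mul_div_cancel' (hpB j)]
    have hfg : f = g ^ p := by
      rw [hf, hfA, hfB, hg, sub_pow_char, mul_pow, ← map_pow, hμ, aux_prod, aux_prod,
        monomial_pow, monomial_pow, one_pow, hsumA, hsumB]
    have hgu : ¬ IsUnit g :=
      aux_not_unit hrs _ _ (fun i => Nat.div_pos (Nat.le_of_dvd (hA i) (hpA i)) hppos)
        (fun j => Nat.div_pos (Nat.le_of_dvd (hB j) (hpB j)) hppos) μ hμ0
    apply hgu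
    apply hsq g
    have h2 : g * g ∣ g ^ p := by
      rw [← sq]
      exact pow_dvd_pow g hfact.out.two_le
    rwa [← hfg] at h2
end

section
/- Let f = x^A − λ y^B with A ∈ ℤ_+^s, B ∈ ℤ_+^r all entries nonzero, m = s + r ≥ 3. Then the complete list of facet normal vectors of NP(f), up to positive scaling, is: the unit vectors e_1,…,e_m together with the vectors v_{i,j} = B_j e_i + A_i e_{s+j} for 1 ≤ i ≤ s, 1 ≤ j ≤ r. In particular NP(f) has exactly m + sr facets when the v_{i,j} are pairwise non-proportional. -/
/-!
For `v ≥ 0`, the face of `conv {p, q} + ℝ≥0^ι` on which `v ⬝ᵥ ·` is minimal is the sum of the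
minimal face of the segment and of the face of the orthant where the coordinates in the support
of `v` vanish. Its dimension is therefore the number of zero coordinates of `v`, plus one when
`v ⬝ᵥ p = v ⬝ᵥ q`, since then the edge direction `p - q` (which has no zero coordinate for a
binomial) is added. So `v` is a facet normal iff either its support is a single point, i.e.
`v = c • e_k`, or its support has two points and `v ⬝ᵥ p = v ⬝ᵥ q`; the second case forces the
support `{i, s + j}` and `v` proportional to `v_{i,j}`. A face determines the support of any of
its nonnegative normals, so these `m + s r` normals give pairwise distinct facets.
-/

open Set Function LinearMap
open scoped Pointwise

def minimizers {E : Type*} (f : E → ℝ) (S : Set E) : Set E := {w ∈ S | ∀ u ∈ S, f w ≤ f u}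

section Minimizers

variable {E : Type*}

lemma minimizers_smul (f : E → ℝ) (S : Set E) {c : ℝ} (hc : 0 < c) :
    minimizers (c • f) S = minimizers f S := by
  ext w
  simp only [minimizers, mem_ofPred_eq, Pi.smul_apply, smul_eq_mul, mul_le_mul_iff_right₀ hc]

lemma minimizers_add [AddCommMonoid E] {F : Type*} [FunLike F E ℝ] [AddMonoidHomClass F E ℝ]
    (f : F) (S T : Set E) : minimizers f (S + T) = minimizers f S + minimizers f T := by
  ext w
  constructor
  · rintro ⟨⟨x, hx, y, hy, rfl⟩, hmin⟩
    refine ⟨x, ⟨hx, fun x' hx' => ?_⟩, y, ⟨hy, fun y' hy' => ?_⟩, rfl⟩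
    · have := hmin (x' + y) (add_mem_add hx' hy)
      simp only [map_add] at this
      linarith
    · have := hmin (x + y') (add_mem_add hx hy')
      simp only [map_add] at this
      linarith
  · rintro ⟨x, ⟨hx, hxmin⟩, y, ⟨hy, hymin⟩, rfl⟩
    refine ⟨add_mem_add hx hy, ?_⟩
    rintro _ ⟨x', hx', y', hy', rfl⟩
    simp only [map_add]
    linarith [hxmin x' hx', hymin y' hy']

lemma minimizers_pair_of_lt (f : E → ℝ) {p q : E} (h : f p < f q) :
    minimizers f {p, q} = {p} := by
  ext w
  simp only [minimizers, mem_insert_iff, mem_singleton_iff, forall_eq_or_imp, forall_eq,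
    mem_ofPred_eq]
  constructor
  · rintro ⟨rfl | rfl, hle, -⟩
    · rfl
    · linarith
  · rintro rfl
    exact ⟨Or.inl rfl, le_rfl, h.le⟩

lemma minimizers_pair_of_eq (f : E → ℝ) {p q : E} (h : f p = f q) :
    minimizers f {p, q} = {p, q} := by
  ext w
  simp only [minimizers, mem_insert_iff, mem_singleton_iff, forall_eq_or_imp, forall_eq,
    mem_ofPred_eq, and_iff_left_iff_imp]
  rintro (rfl | rfl) <;> simp [h]

lemma minimizers_pair_nonempty (f : E → ℝ) (p q : E) : (minimizers f {p, q}).Nonempty := by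
  rcases lt_trichotomy (f p) (f q) with h | h | h
  · simp [minimizers_pair_of_lt f h]
  · simp [minimizers_pair_of_eq f h]
  · simp [pair_comm p q, minimizers_pair_of_lt f h]

variable [AddCommGroup E] [Module ℝ E]

lemma minimizers_convexHull_pair (f : E →ₗ[ℝ] ℝ) (p q : E) :
    minimizers f (convexHull ℝ {p, q}) = convexHull ℝ (minimizers f {p, q}) := by
  wlog hpq : f p ≤ f q generalizing p q
  · rw [pair_comm, this q p (le_of_not_ge hpq), pair_comm]
  have hval : ∀ a b : ℝ, a + b = 1 → f (a • p + b • q) = f p + b * (f q - f p) := by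
    intro a b hab
    rw [map_add, map_smul, map_smul, smul_eq_mul, smul_eq_mul]
    linear_combination f p * hab
  rcases hpq.lt_or_eq with hlt | heq
  · rw [minimizers_pair_of_lt f hlt, convexHull_singleton, convexHull_pair]
    ext w
    simp only [minimizers, mem_ofPred_eq, mem_singleton_iff]
    constructor
    · rintro ⟨⟨a, b, ha, hb, hab, rfl⟩, hmin⟩
      have hle := hmin p (left_mem_segment ℝ p q)
      rw [hval a b hab] at hle
      obtain rfl : b = 0 := by nlinarith
      simp [show a = 1 by linarith]
    · intro hw
      rw [hw]
      refine ⟨left_mem_segment ℝ p q, ?_⟩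
      rintro _ ⟨a, b, ha, hb, hab, rfl⟩
      rw [hval a b hab]
      nlinarith
  · rw [minimizers_pair_of_eq f heq, convexHull_pair]
    ext w
    simp only [minimizers, mem_ofPred_eq, and_iff_left_iff_imp]
    rintro ⟨a, b, ha, hb, hab, rfl⟩ _ ⟨a', b', ha', hb', hab', rfl⟩
    rw [hval a b hab, hval a' b' hab', heq]
    simp

end Minimizers

lemma vectorSpan_add {k V : Type*} [Ring k] [AddCommGroup V] [Module k V] {S T : Set V}
    (hS : S.Nonempty) (hT : T.Nonempty) :
    vectorSpan k (S + T) = vectorSpan k S ⊔ vectorSpan k T := by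
  obtain ⟨p, hp⟩ := hS
  obtain ⟨q, hq⟩ := hT
  apply le_antisymm
  · rw [vectorSpan_def, Submodule.span_le]
    rintro _ ⟨_, ⟨x, hx, y, hy, rfl⟩, _, ⟨x', hx', y', hy', rfl⟩, rfl⟩
    change (x + y) - (x' + y') ∈ _
    rw [add_sub_add_comm]
    exact Submodule.add_mem_sup (vsub_mem_vectorSpan k hx hx') (vsub_mem_vectorSpan k hy hy')
  · refine sup_le ?_ ?_ <;> rw [vectorSpan_def, Submodule.span_le]
    · rintro _ ⟨x, hx, x', hx', rfl⟩
      simpa using vsub_mem_vectorSpan k (add_mem_add hx hq) (add_mem_add hx' hq)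
    · rintro _ ⟨y, hy, y', hy', rfl⟩
      simpa using vsub_mem_vectorSpan k (add_mem_add hp hy) (add_mem_add hp hy')

lemma vectorSpan_convexHull {E : Type*} [AddCommGroup E] [Module ℝ E] (s : Set E) :
    vectorSpan ℝ (convexHull ℝ s) = vectorSpan ℝ s := by
  rw [← direction_affineSpan, affineSpan_convexHull, direction_affineSpan]

section Orthant

variable {ι : Type*}

def orthantFace (N : Set ι) : Set (ι → ℝ) := {t | 0 ≤ t ∧ ∀ k ∈ N, t k = 0}

lemma zero_mem_orthantFace (N : Set ι) : 0 ∈ orthantFace N := ⟨le_rfl, fun _ _ => rfl⟩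

lemma single_mem_orthantFace [DecidableEq ι] {N : Set ι} {k : ι} (hk : k ∉ N) :
    Pi.single k 1 ∈ orthantFace N :=
  ⟨Pi.single_nonneg.2 zero_le_one,
    fun k' hk' => Pi.single_eq_of_ne (by rintro rfl; exact hk hk') _⟩

lemma vectorSpan_orthantFace (N : Set ι) :
    vectorSpan ℝ (orthantFace N) = ⨅ k ∈ N, ker (proj k : (ι → ℝ) →ₗ[ℝ] ℝ) := by
  rw [vectorSpan_eq_span_vsub_set_right ℝ (zero_mem_orthantFace N)]
  simp only [vsub_eq_sub, sub_zero, image_id']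
  apply le_antisymm
  · rw [Submodule.span_le]
    rintro t ⟨-, ht⟩
    simpa [Submodule.mem_iInf] using ht
  · intro x hx
    simp only [Submodule.mem_iInf, mem_ker, proj_apply] at hx
    rw [← posPart_sub_negPart x]
    refine sub_mem (Submodule.subset_span ⟨posPart_nonneg x, fun k hk => ?_⟩)
      (Submodule.subset_span ⟨negPart_nonneg x, fun k hk => ?_⟩) <;>
      simp [hx k hk]

lemma finrank_iInf_ker_proj {R : Type*} [Ring R] [StrongRankCondition R] [Finite ι]
    (N : Set ι) :
    Module.finrank R (⨅ k ∈ N, ker (proj k : (ι → R) →ₗ[R] R) : Submodule R (ι → R)) =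
      Nᶜ.ncard := by
  classical
  have := Fintype.ofFinite ι
  rw [(iInfKerProjEquiv R (fun _ => R) (I := Nᶜ) disjoint_compl_left (by simp)).finrank_eq,
    Module.finrank_fintype_fun_eq_card, ← Nat.card_eq_fintype_card, Nat.card_coe_set_eq]

lemma dotProduct_eq_zero_iff_of_pos [Fintype ι] {v w : ι → ℝ} (hv : 0 ≤ v)
    (hw : ∀ i, 0 < w i) : v ⬝ᵥ w = 0 ↔ v = 0 := by
  rw [dotProduct, Finset.sum_eq_zero_iff_of_nonneg fun i _ => mul_nonneg (hv i) (hw i).le,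
    funext_iff]
  simp [(hw _).ne']

lemma ncard_support_eq_one_iff [DecidableEq ι] {v : ι → ℝ} (hv : 0 ≤ v) :
    (support v).ncard = 1 ↔ ∃ c : ℝ, 0 < c ∧ ∃ k, v = c • Pi.single k 1 := by
  constructor
  · intro h
    obtain ⟨k, hk⟩ := ncard_eq_one.1 h
    have hvanish : ∀ k' ≠ k, v k' = 0 := fun k' hk' =>
      notMem_support.1 (by rw [hk]; exact hk')
    refine ⟨v k, (hv k).lt_of_ne' (mem_support.1 (by simp [hk])), k, ?_⟩
    funext k'
    by_cases h : k' = k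
    · subst h; simp
    · simp [hvanish k' h, h]
  · rintro ⟨c, hc, k, rfl⟩
    rw [← Pi.single_smul', smul_eq_mul, mul_one, Pi.support_single_of_ne hc.ne', ncard_singleton]

variable [Fintype ι] [DecidableEq ι]

def binomialNewtonPolyhedron (p q : ι → ℝ) : Set (ι → ℝ) := convexHull ℝ {p, q} + Ici 0

lemma minimizers_dotProduct_smul (v : ι → ℝ) (S : Set (ι → ℝ)) {c : ℝ} (hc : 0 < c) :
    minimizers (dotProductEquiv ℝ ι (c • v)) S = minimizers (dotProductEquiv ℝ ι v) S := by
  rw [map_smul, LinearMap.coe_smul, minimizers_smul _ _ hc]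

lemma minimizers_dotProduct_nonneg {v : ι → ℝ} (hv : 0 ≤ v) :
    minimizers (dotProductEquiv ℝ ι v) (Ici 0) = orthantFace (support v) := by
  ext t
  simp only [minimizers, orthantFace, mem_Ici, dotProductEquiv_apply_apply, mem_ofPred_eq]
  refine and_congr_right fun ht => ?_
  have hzero : v ⬝ᵥ t = 0 ↔ ∀ k ∈ support v, t k = 0 := by
    rw [dotProduct, Finset.sum_eq_zero_iff_of_nonneg fun k _ => mul_nonneg (hv k) (ht k)]
    simp [or_iff_not_imp_left]
  rw [← hzero]
  constructor
  · intro hmin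
    exact le_antisymm (by simpa using hmin 0 le_rfl) (dotProduct_nonneg_of_nonneg hv ht)
  · intro h u hu
    rw [h]
    exact dotProduct_nonneg_of_nonneg hv hu

lemma minimizers_dotProduct_binomialNewtonPolyhedron {v : ι → ℝ} (hv : 0 ≤ v) (p q : ι → ℝ) :
    minimizers (dotProductEquiv ℝ ι v) (binomialNewtonPolyhedron p q) =
      convexHull ℝ (minimizers (dotProductEquiv ℝ ι v) {p, q}) +
        orthantFace (support v) := by
  rw [binomialNewtonPolyhedron, minimizers_add, minimizers_convexHull_pair,
    minimizers_dotProduct_nonneg hv]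

lemma finrank_vectorSpan_minimizers_binomialNewtonPolyhedron {v p q : ι → ℝ} (hv : 0 ≤ v)
    (hpq : ∃ k ∈ support v, p k ≠ q k) :
    Module.finrank ℝ
        (vectorSpan ℝ (minimizers (dotProductEquiv ℝ ι v) (binomialNewtonPolyhedron p q))) =
      (support v)ᶜ.ncard + if v ⬝ᵥ p = v ⬝ᵥ q then 1 else 0 := by
  rw [minimizers_dotProduct_binomialNewtonPolyhedron hv,
    vectorSpan_add (minimizers_pair_nonempty _ p q).convexHull ⟨0, zero_mem_orthantFace _⟩,
    vectorSpan_convexHull, vectorSpan_orthantFace]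
  split_ifs with h
  · have hnot : p -ᵥ q ∉ (⨅ k ∈ support v, ker (proj k : (ι → ℝ) →ₗ[ℝ] ℝ)) := by
      obtain ⟨k, hk, hne⟩ := hpq
      simp only [Submodule.mem_iInf, mem_ker, proj_apply, not_forall]
      exact ⟨k, hk, sub_ne_zero.2 hne⟩
    rw [minimizers_pair_of_eq (dotProductEquiv ℝ ι v) h, vectorSpan_pair, sup_comm,
      Submodule.finrank_sup_span_singleton hnot, finrank_iInf_ker_proj]
  · obtain ⟨x, hx⟩ : ∃ x, minimizers (dotProductEquiv ℝ ι v) {p, q} = {x} := by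
      rcases lt_or_gt_of_ne h with hlt | hgt
      · exact ⟨p, minimizers_pair_of_lt (dotProductEquiv ℝ ι v) hlt⟩
      · exact ⟨q, pair_comm p q ▸ minimizers_pair_of_lt (dotProductEquiv ℝ ι v) hgt⟩
    rw [hx, vectorSpan_singleton, bot_sup_eq, finrank_iInf_ker_proj, add_zero]

-- Moving a point of the face along `e_k` with `v k = 0` stays in the face, so `v' k = 0` too.
lemma support_subset_of_minimizers_dotProduct_eq {v v' p q : ι → ℝ} (hv : 0 ≤ v)
    (h : minimizers (dotProductEquiv ℝ ι v) (binomialNewtonPolyhedron p q) =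
      minimizers (dotProductEquiv ℝ ι v') (binomialNewtonPolyhedron p q)) :
    support v' ⊆ support v := by
  intro k hk'
  by_contra hk
  obtain ⟨m, hm⟩ :=
    (minimizers_pair_nonempty (dotProductEquiv ℝ ι v) p q).convexHull (𝕜 := ℝ)
  have hmem : ∀ t ∈ orthantFace (support v),
      m + t ∈ minimizers (dotProductEquiv ℝ ι v') (binomialNewtonPolyhedron p q) := by
    intro t ht
    rw [← h, minimizers_dotProduct_binomialNewtonPolyhedron hv]
    exact add_mem_add hm ht
  have h0 := hmem 0 (zero_mem_orthantFace _)
  have h1 := hmem _ (single_mem_orthantFace hk)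
  have heq := le_antisymm (h0.2 _ h1.1) (h1.2 _ h0.1)
  simp only [dotProductEquiv_apply_apply, dotProduct_add, dotProduct_zero,
    dotProduct_single, mul_one] at heq
  exact hk' (by linarith)

end Orthant

lemma singleton_ne_pair_inl_inr {α β : Type*} (k : α ⊕ β) (i : α) (j : β) :
    ({k} : Set (α ⊕ β)) ≠ {Sum.inl i, Sum.inr j} := by
  intro h
  have hi : Sum.inl i ∈ ({k} : Set (α ⊕ β)) := h ▸ mem_insert _ _
  have hj : Sum.inr j ∈ ({k} : Set (α ⊕ β)) := h ▸ mem_insert_of_mem _ rfl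
  exact Sum.inl_ne_inr (hi.trans hj.symm)

section Binomial

variable {α β : Type*} {A : α → ℝ} {B : β → ℝ}

section

variable [Fintype α] [Fintype β]

lemma dotProduct_sumElim_zero (v : α ⊕ β → ℝ) :
    v ⬝ᵥ Sum.elim A 0 = (v ∘ Sum.inl) ⬝ᵥ A := by
  conv_lhs => rw [← Sum.elim_comp_inl_inr v]
  rw [sumElim_dotProduct_sumElim, dotProduct_zero, add_zero]

lemma dotProduct_zero_sumElim (v : α ⊕ β → ℝ) :
    v ⬝ᵥ Sum.elim 0 B = (v ∘ Sum.inr) ⬝ᵥ B := by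
  conv_lhs => rw [← Sum.elim_comp_inl_inr v]
  rw [sumElim_dotProduct_sumElim, dotProduct_zero, zero_add]

lemma exists_inl_inr_mem_support (hA : ∀ i, 0 < A i) (hB : ∀ j, 0 < B j) {v : α ⊕ β → ℝ}
    (hv : 0 ≤ v) (hv0 : v ≠ 0) (hab : v ⬝ᵥ Sum.elim A 0 = v ⬝ᵥ Sum.elim 0 B) :
    (∃ i, Sum.inl i ∈ support v) ∧ ∃ j, Sum.inr j ∈ support v := by
  have hzero_iff : v ∘ Sum.inl = 0 ↔ v ∘ Sum.inr = 0 := by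
    rw [← dotProduct_eq_zero_iff_of_pos (v := v ∘ Sum.inl) (fun i => hv _) hA,
      ← dotProduct_eq_zero_iff_of_pos (v := v ∘ Sum.inr) (fun j => hv _) hB,
      ← dotProduct_sumElim_zero, ← dotProduct_zero_sumElim, hab]
  have hboth : ¬ (v ∘ Sum.inl = 0 ∧ v ∘ Sum.inr = 0) := fun h =>
    hv0 (by rw [← Sum.elim_comp_inl_inr v, h.1, h.2, Sum.elim_zero_zero])
  exact ⟨ne_iff.1 fun h => hboth ⟨h, hzero_iff.1 h⟩, ne_iff.1 fun h => hboth ⟨hzero_iff.2 h, h⟩⟩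

end

variable [DecidableEq α] [DecidableEq β]

variable (A B) in
def mixedNormal (i : α) (j : β) : α ⊕ β → ℝ :=
  Sum.elim (Pi.single i (B j)) (Pi.single j (A i))

lemma support_mixedNormal {i : α} {j : β} (hA : A i ≠ 0) (hB : B j ≠ 0) :
    support (mixedNormal A B i j) = {Sum.inl i, Sum.inr j} := by
  ext (i' | j')
  · by_cases h : i' = i <;> simp [mixedNormal, h, hB]
  · by_cases h : j' = j <;> simp [mixedNormal, h, hA]

lemma mixedNormal_nonneg (hA : 0 ≤ A) (hB : 0 ≤ B) (i : α) (j : β) : 0 ≤ mixedNormal A B i j := by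
  rintro (i' | j')
  · exact (Pi.single_nonneg (α := fun _ => ℝ)).2 (hB j) i'
  · exact (Pi.single_nonneg (α := fun _ => ℝ)).2 (hA i) j'

variable (A B) in
def facetNormal : (α ⊕ β) ⊕ (α × β) → α ⊕ β → ℝ :=
  Sum.elim (fun k => Pi.single k 1) (fun ij => mixedNormal A B ij.1 ij.2)

lemma support_facetNormal (hA : ∀ i, A i ≠ 0) (hB : ∀ j, B j ≠ 0) (x : (α ⊕ β) ⊕ (α × β)) :
    support (facetNormal A B x) =
      Sum.elim (fun k => {k}) (fun ij => {Sum.inl ij.1, Sum.inr ij.2}) x := by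
  rcases x with k | ⟨i, j⟩
  · exact Pi.support_single_of_ne one_ne_zero
  · exact support_mixedNormal (hA i) (hB j)

lemma facetNormal_nonneg (hA : 0 ≤ A) (hB : 0 ≤ B) (x : (α ⊕ β) ⊕ (α × β)) :
    0 ≤ facetNormal A B x := by
  rcases x with k | ⟨i, j⟩
  · exact Pi.single_nonneg.2 zero_le_one
  · exact mixedNormal_nonneg hA hB i j

lemma facetNormal_ne_zero (hA : ∀ i, A i ≠ 0) (hB : ∀ j, B j ≠ 0) (x : (α ⊕ β) ⊕ (α × β)) :
    facetNormal A B x ≠ 0 := by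
  rw [← support_nonempty_iff, support_facetNormal hA hB]
  rcases x with k | ij <;> simp

lemma eq_sumElim_single_of_support_eq_pair {v : α ⊕ β → ℝ} {i : α} {j : β}
    (h : support v = {Sum.inl i, Sum.inr j}) :
    v = Sum.elim (Pi.single i (v (Sum.inl i))) (Pi.single j (v (Sum.inr j))) := by
  ext (i' | j')
  · by_cases hi : i' = i
    · simp [hi]
    · simpa [hi] using notMem_support.1 (h ▸ (by simp [hi] : Sum.inl i' ∉ _))
  · by_cases hj : j' = j
    · simp [hj]
    · simpa [hj] using notMem_support.1 (h ▸ (by simp [hj] : Sum.inr j' ∉ _))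

variable [Fintype α] [Fintype β]

lemma smul_single_dotProduct_sumElim_ne (hA : ∀ i, A i ≠ 0) (hB : ∀ j, B j ≠ 0) {c : ℝ} (hc : c ≠ 0)
    (k : α ⊕ β) :
    (c • Pi.single k 1 : α ⊕ β → ℝ) ⬝ᵥ Sum.elim A 0 ≠ (c • Pi.single k 1) ⬝ᵥ Sum.elim 0 B := by
  rcases k with i | j <;> simp [smul_dotProduct, hc, hA, hB, eq_comm]

lemma mixedNormal_dotProduct_sumElim_zero (i : α) (j : β) :
    mixedNormal A B i j ⬝ᵥ Sum.elim A 0 = B j * A i := by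
  simp [mixedNormal, sumElim_dotProduct_sumElim]

lemma mixedNormal_dotProduct_zero_sumElim (i : α) (j : β) :
    mixedNormal A B i j ⬝ᵥ Sum.elim 0 B = B j * A i := by
  simp [mixedNormal, sumElim_dotProduct_sumElim, mul_comm]

lemma exists_eq_smul_mixedNormal (hA : ∀ i, 0 < A i) (hB : ∀ j, 0 < B j)
    {v : α ⊕ β → ℝ} (hv : 0 ≤ v) (hv0 : v ≠ 0) (hab : v ⬝ᵥ Sum.elim A 0 = v ⬝ᵥ Sum.elim 0 B)
    (h2 : (support v).ncard = 2) :
    ∃ c : ℝ, 0 < c ∧ ∃ i j, v = c • mixedNormal A B i j := by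
  obtain ⟨⟨i, hi⟩, ⟨j, hj⟩⟩ := exists_inl_inr_mem_support hA hB hv hv0 hab
  have hv_eq := eq_sumElim_single_of_support_eq_pair
    (eq_of_subset_of_ncard_le (pair_subset hi hj) (by rw [h2, ncard_pair Sum.inl_ne_inr])).symm
  rw [hv_eq] at hab
  simp only [sumElim_dotProduct_sumElim, single_dotProduct, dotProduct_zero,
    add_zero, zero_add] at hab
  have hBj := hB j
  refine ⟨v (Sum.inl i) / B j, div_pos ((hv _).lt_of_ne' hi) hBj, i, j, ?_⟩
  rw [hv_eq, mixedNormal]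
  ext (i' | j') <;> simp only [Pi.smul_apply, Sum.elim_inl, Sum.elim_inr, Pi.single_apply,
    smul_eq_mul, mul_ite, mul_zero]
  · split_ifs <;> field_simp
  · split_ifs
    · field_simp
      linear_combination -hab
    · rfl

lemma ncard_compl_support_add_eq_card_sub_one_iff (hA : ∀ i, 0 < A i) (hB : ∀ j, 0 < B j)
    {v : α ⊕ β → ℝ} (hv : 0 ≤ v) (hv0 : v ≠ 0) :
    (support v)ᶜ.ncard + (if v ⬝ᵥ Sum.elim A 0 = v ⬝ᵥ Sum.elim 0 B then 1 else 0) =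
        Fintype.card α + Fintype.card β - 1 ↔
      (∃ c : ℝ, 0 < c ∧ ∃ k, v = c • Pi.single k 1) ∨
        (∃ c : ℝ, 0 < c ∧ ∃ i j, v = c • mixedNormal A B i j) := by
  have hcard : (support v)ᶜ.ncard + (support v).ncard =
      Fintype.card α + Fintype.card β := by
    rw [add_comm, ncard_add_ncard_compl, Nat.card_eq_fintype_card, Fintype.card_sum]
  have hpos : 0 < (support v).ncard :=
    (ncard_pos (toFinite _)).2 (support_nonempty_iff.2 hv0)
  split_ifs with hab
  · have hsingle : ¬ ∃ c : ℝ, 0 < c ∧ ∃ k, v = c • Pi.single k 1 := by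
      rintro ⟨c, hc, k, rfl⟩
      exact smul_single_dotProduct_sumElim_ne (fun i => (hA i).ne') (fun j => (hB j).ne')
        hc.ne' k hab
    rw [or_iff_right hsingle]
    constructor
    · intro h
      exact exists_eq_smul_mixedNormal hA hB hv hv0 hab (by omega)
    · rintro ⟨c, hc, i, j, rfl⟩
      have h2 : (support (c • mixedNormal A B i j)).ncard = 2 := by
        rw [support_const_smul_of_ne_zero _ _ hc.ne',
          support_mixedNormal (hA i).ne' (hB j).ne', ncard_pair Sum.inl_ne_inr]
      omega
  · have hnormal : ¬ ∃ c : ℝ, 0 < c ∧ ∃ i j, v = c • mixedNormal A B i j := by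
      rintro ⟨c, hc, i, j, rfl⟩
      apply hab
      rw [smul_dotProduct, smul_dotProduct, mixedNormal_dotProduct_sumElim_zero,
        mixedNormal_dotProduct_zero_sumElim]
    rw [or_iff_left hnormal, ← ncard_support_eq_one_iff hv]
    omega

variable (A B) in
def binomialFace (v : α ⊕ β → ℝ) : Set (α ⊕ β → ℝ) :=
  minimizers (dotProductEquiv ℝ _ v) (binomialNewtonPolyhedron (Sum.elim A 0) (Sum.elim 0 B))

lemma finrank_vectorSpan_binomialFace_eq_iff (hA : ∀ i, 0 < A i) (hB : ∀ j, 0 < B j)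
    {v : α ⊕ β → ℝ} (hv : 0 ≤ v) (hv0 : v ≠ 0) :
    Module.finrank ℝ (vectorSpan ℝ (binomialFace A B v)) = Fintype.card α + Fintype.card β - 1 ↔
      (∃ c : ℝ, 0 < c ∧ ∃ k, v = c • Pi.single k 1) ∨
        (∃ c : ℝ, 0 < c ∧ ∃ i j, v = c • mixedNormal A B i j) := by
  obtain ⟨k, hk⟩ := support_nonempty_iff.2 hv0
  have hne : Sum.elim A 0 k ≠ Sum.elim (0 : α → ℝ) B k := by
    rcases k with i | j
    · simpa using (hA i).ne'
    · simpa using (hB j).ne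
  rw [binomialFace, finrank_vectorSpan_minimizers_binomialNewtonPolyhedron hv ⟨k, hk, hne⟩]
  exact ncard_compl_support_add_eq_card_sub_one_iff hA hB hv hv0

lemma setOf_facets_binomialFace_eq_range (hA : ∀ i, 0 < A i) (hB : ∀ j, 0 < B j) :
    {F | ∃ v : α ⊕ β → ℝ, 0 ≤ v ∧ v ≠ 0 ∧
        Module.finrank ℝ (vectorSpan ℝ (binomialFace A B v)) =
          Fintype.card α + Fintype.card β - 1 ∧ F = binomialFace A B v} =
      range (binomialFace A B ∘ facetNormal A B) := by
  have hnonneg := facetNormal_nonneg (A := A) (B := B) (fun i => (hA i).le) (fun j => (hB j).le)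
  have hne := facetNormal_ne_zero (A := A) (B := B) (fun i => (hA i).ne') (fun j => (hB j).ne')
  ext F
  constructor
  · rintro ⟨v, hv, hv0, hrank, rfl⟩
    rcases (finrank_vectorSpan_binomialFace_eq_iff hA hB hv hv0).1 hrank with
      ⟨c, hc, k, rfl⟩ | ⟨c, hc, i, j, rfl⟩
    · exact ⟨Sum.inl k, (minimizers_dotProduct_smul _ _ hc).symm⟩
    · exact ⟨Sum.inr (i, j), (minimizers_dotProduct_smul _ _ hc).symm⟩
  · rintro ⟨x, rfl⟩
    refine ⟨facetNormal A B x, hnonneg x, hne x,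
      (finrank_vectorSpan_binomialFace_eq_iff hA hB (hnonneg x) (hne x)).2 ?_, rfl⟩
    rcases x with k | ⟨i, j⟩
    · exact Or.inl ⟨1, one_pos, k, (one_smul _ _).symm⟩
    · exact Or.inr ⟨1, one_pos, i, j, (one_smul _ _).symm⟩

lemma injective_binomialFace_comp_facetNormal (hA : 0 ≤ A) (hB : 0 ≤ B) (hA₀ : ∀ i, A i ≠ 0)
    (hB₀ : ∀ j, B j ≠ 0) : Injective (binomialFace A B ∘ facetNormal A B) := by
  intro x y hxy
  have hsupp :=
    (support_subset_of_minimizers_dotProduct_eq (facetNormal_nonneg hA hB y) hxy.symm).antisymm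
      (support_subset_of_minimizers_dotProduct_eq (facetNormal_nonneg hA hB x) hxy)
  rw [support_facetNormal hA₀ hB₀, support_facetNormal hA₀ hB₀] at hsupp
  rcases x with k | ⟨i, j⟩ <;> rcases y with k' | ⟨i', j'⟩ <;>
    simp only [Sum.elim_inl, Sum.elim_inr] at hsupp
  · rw [singleton_eq_singleton_iff.1 hsupp]
  · exact absurd hsupp (singleton_ne_pair_inl_inr _ _ _)
  · exact absurd hsupp.symm (singleton_ne_pair_inl_inr _ _ _)
  · simpa [pair_eq_pair_iff] using hsupp

lemma ncard_setOf_facets_binomialFace (hA : ∀ i, 0 < A i) (hB : ∀ j, 0 < B j) :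
    {F | ∃ v : α ⊕ β → ℝ, 0 ≤ v ∧ v ≠ 0 ∧
        Module.finrank ℝ (vectorSpan ℝ (binomialFace A B v)) =
          Fintype.card α + Fintype.card β - 1 ∧ F = binomialFace A B v}.ncard =
      Fintype.card α + Fintype.card β + Fintype.card α * Fintype.card β := by
  rw [setOf_facets_binomialFace_eq_range hA hB,
    ncard_range_of_injective (injective_binomialFace_comp_facetNormal (fun i => (hA i).le)
      (fun j => (hB j).le) (fun i => (hA i).ne') (fun j => (hB j).ne')),
    Nat.card_sum, Nat.card_sum, Nat.card_prod]
  simp only [Nat.card_eq_fintype_card]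

end Binomial

theorem stmt10_general {s r : ℕ}
    (A : Fin s → ℕ) (B : Fin r → ℕ) (hA : ∀ i, 0 < A i) (hB : ∀ j, 0 < B j)
    (vA vB : Fin s ⊕ Fin r → ℝ)
    (hvA : vA = Sum.elim (fun i' => (A i' : ℝ)) (0 : Fin r → ℝ))
    (hvB : vB = Sum.elim (0 : Fin s → ℝ) (fun j' => (B j' : ℝ)))
    (vij : Fin s → Fin r → (Fin s ⊕ Fin r → ℝ))
    (hvij : ∀ i j, vij i j = Sum.elim (fun i' => if i' = i then (B j : ℝ) else 0)
                          (fun j' => if j' = j then (A i : ℝ) else 0))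
    (P : Set (Fin s ⊕ Fin r → ℝ))
    (hP : P = {w | ∃ u ∈ convexHull ℝ {vA, vB}, ∃ v : Fin s ⊕ Fin r → ℝ,
        (∀ k, 0 ≤ v k) ∧ w = u + v})
    (face : (Fin s ⊕ Fin r → ℝ) → Set (Fin s ⊕ Fin r → ℝ))
    (hface : ∀ v, face v = {w ∈ P | ∀ u ∈ P, ∑ k, v k * w k ≤ ∑ k, v k * u k}) :
    (∀ v : Fin s ⊕ Fin r → ℝ, (∀ k, 0 ≤ v k) → v ≠ 0 →
      (Module.finrank ℝ (vectorSpan ℝ (face v)) = s + r - 1 ↔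
        (∃ c : ℝ, 0 < c ∧ ∃ k, v = c • (Pi.single k 1 : Fin s ⊕ Fin r → ℝ)) ∨
        (∃ c : ℝ, 0 < c ∧ ∃ i j, v = c • vij i j))) ∧
    ((∀ i j i' j', (∃ c : ℝ, 0 < c ∧ vij i j = c • vij i' j') → i = i' ∧ j = j') →
      {F : Set (Fin s ⊕ Fin r → ℝ) | ∃ v : Fin s ⊕ Fin r → ℝ, (∀ k, 0 ≤ v k) ∧
        v ≠ 0 ∧ Module.finrank ℝ (vectorSpan ℝ (face v)) = s + r - 1 ∧
        F = face v}.ncard = s + r + s * r) := by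
  have hA' : ∀ i, 0 < (A i : ℝ) := fun i => Nat.cast_pos.2 (hA i)
  have hB' : ∀ j, 0 < (B j : ℝ) := fun j => Nat.cast_pos.2 (hB j)
  have hvij' : vij = mixedNormal (fun i => (A i : ℝ)) (fun j => (B j : ℝ)) := by
    ext i j (i' | j') <;> simp [hvij, mixedNormal, Pi.single_apply]
  have hP' : P = binomialNewtonPolyhedron vA vB := by
    ext w
    simp [hP, binomialNewtonPolyhedron, mem_add, eq_comm, Pi.le_def]
  have hface' : face = binomialFace (fun i => (A i : ℝ)) (fun j => (B j : ℝ)) := by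
    ext v w
    rw [hface, binomialFace, ← hvA, ← hvB, ← hP']
    rfl
  subst hvij' hface'
  refine ⟨fun v hv hv0 => ?_, fun _ => ?_⟩
  · simpa only [Fintype.card_fin] using finrank_vectorSpan_binomialFace_eq_iff hA' hB' hv hv0
  · simpa only [Fintype.card_fin, Pi.le_def, Pi.zero_apply] using
      ncard_setOf_facets_binomialFace hA' hB'

/-- For the pure binomial `f = x^A - λ y^B` (all entries of `A ∈ ℤ_+^s`,
`B ∈ ℤ_+^r` nonzero, `m = s + r ≥ 3`) with Newton polyhedron
`P = conv{(A,0),(0,B)} + ℝ_{≥0}^m`: a vector `v ∈ ℝ_{≥0}^m \ {0}` is a facet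
normal of `P` (i.e. its minimizing face has dimension `m - 1`) iff, up to a
positive scaling, `v` is a unit vector `e_k` or one of the vectors
`v_{i,j} = B_j e_i + A_i e_{s+j}`.  In particular, if the `v_{i,j}` are pairwise
non-proportional, `P` has exactly `m + s·r` facets. -/
theorem stmt10 {s r : ℕ} (hm : 3 ≤ s + r)
    (A : Fin s → ℕ) (B : Fin r → ℕ) (hA : ∀ i, 0 < A i) (hB : ∀ j, 0 < B j)
    (vA vB : Fin s ⊕ Fin r → ℝ)
    (hvA : vA = Sum.elim (fun i' => (A i' : ℝ)) (0 : Fin r → ℝ))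
    (hvB : vB = Sum.elim (0 : Fin s → ℝ) (fun j' => (B j' : ℝ)))
    (vij : Fin s → Fin r → (Fin s ⊕ Fin r → ℝ))
    (hvij : ∀ i j, vij i j = Sum.elim (fun i' => if i' = i then (B j : ℝ) else 0)
                          (fun j' => if j' = j then (A i : ℝ) else 0))
    (P : Set (Fin s ⊕ Fin r → ℝ))
    (hP : P = {w | ∃ u ∈ convexHull ℝ {vA, vB}, ∃ v : Fin s ⊕ Fin r → ℝ,
        (∀ k, 0 ≤ v k) ∧ w = u + v})
    (face : (Fin s ⊕ Fin r → ℝ) → Set (Fin s ⊕ Fin r → ℝ))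
    (hface : ∀ v, face v = {w ∈ P | ∀ u ∈ P, ∑ k, v k * w k ≤ ∑ k, v k * u k}) :
    (∀ v : Fin s ⊕ Fin r → ℝ, (∀ k, 0 ≤ v k) → v ≠ 0 →
      (Module.finrank ℝ (vectorSpan ℝ (face v)) = s + r - 1 ↔
        (∃ c : ℝ, 0 < c ∧ ∃ k, v = c • (Pi.single k 1 : Fin s ⊕ Fin r → ℝ)) ∨
        (∃ c : ℝ, 0 < c ∧ ∃ i j, v = c • vij i j))) ∧
    ((∀ i j i' j', (∃ c : ℝ, 0 < c ∧ vij i j = c • vij i' j') → i = i' ∧ j = j') →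
      {F : Set (Fin s ⊕ Fin r → ℝ) | ∃ v : Fin s ⊕ Fin r → ℝ, (∀ k, 0 ≤ v k) ∧
        v ≠ 0 ∧ Module.finrank ℝ (vectorSpan ℝ (face v)) = s + r - 1 ∧
        F = face v}.ncard = s + r + s * r) :=
  stmt10_general A B hA hB vA vB hvA hvB vij hvij P hP face hface
end

section
/- Let A ∈ ℤ_+^s, B ∈ ℤ_+^r, and for each i,j let d_{ij} = gcd(A_i, B_j), A_{ij} = A_i/d_{ij}, B_{ij} = B_j/d_{ij}. Define the monomial substitution x_i = x_i'·∏_{j=1}^r z_{ij}^{B_{ij}}, y_j = y_j'·∏_{i=1}^s z_{ij}^{A_{ij}}. Then in the ring K[x', y', z], one has x^A − λ y^B = (∏_{i,j} z_{ij}^{d_{ij} A_{ij} B_{ij}}) · (x'^A − λ y'^B). -/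
open MvPolynomial

/-- With `d_{ij} = gcd(A_i, B_j)`, `A_{ij} = A_i / d_{ij}`, `B_{ij} = B_j / d_{ij}`,
the monomial substitution `x_i ↦ x_i' ∏_j z_{ij}^{B_{ij}}`,
`y_j ↦ y_j' ∏_i z_{ij}^{A_{ij}}` transforms the binomial `x^A - λ y^B` into
`(∏_{i,j} z_{ij}^{d_{ij} A_{ij} B_{ij}}) · (x'^A - λ y'^B)`. -/
theorem stmt12 {K : Type*} [CommRing K] (lam : K)
    {s r : ℕ} (A : Fin s → ℕ) (B : Fin r → ℕ)
    (hA : ∀ i, 0 < A i) (hB : ∀ j, 0 < B j)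
    (d : Fin s → Fin r → ℕ) (hd : ∀ i j, d i j = Nat.gcd (A i) (B j))
    (g : Fin s ⊕ Fin r → MvPolynomial ((Fin s ⊕ Fin r) ⊕ (Fin s × Fin r)) K)
    (hgx : ∀ i, g (Sum.inl i) =
      X (Sum.inl (Sum.inl i)) * ∏ j, X (Sum.inr (i, j)) ^ (B j / d i j))
    (hgy : ∀ j, g (Sum.inr j) =
      X (Sum.inl (Sum.inr j)) * ∏ i, X (Sum.inr (i, j)) ^ (A i / d i j)) :
    aeval g ((∏ i, X (Sum.inl i) ^ A i) - C lam * ∏ j, X (Sum.inr j) ^ B j) =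
      (∏ i, ∏ j, X (Sum.inr (i, j)) ^ (d i j * (A i / d i j) * (B j / d i j))) *
        ((∏ i, X (Sum.inl (Sum.inl i)) ^ A i)
          - C lam * ∏ j, X (Sum.inl (Sum.inr j)) ^ B j) := by
  have hdA : ∀ i j, d i j * (A i / d i j) = A i := fun i j => by
    rw [hd]; exact Nat.mul_div_cancel' (Nat.gcd_dvd_left _ _)
  have hdB : ∀ i j, d i j * (B j / d i j) = B j := fun i j => by
    rw [hd]; exact Nat.mul_div_cancel' (Nat.gcd_dvd_right _ _)
  have key1 : ∀ i j, (B j / d i j) * A i = d i j * (A i / d i j) * (B j / d i j) := by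
    intro i j; rw [hdA, mul_comm]
  have key2 : ∀ i j, (A i / d i j) * B j = d i j * (A i / d i j) * (B j / d i j) := by
    intro i j
    conv_lhs => rw [← hdB i j]
    ring
  have hx : aeval g (∏ i, (X (Sum.inl i) : MvPolynomial (Fin s ⊕ Fin r) K) ^ A i)
      = (∏ i, ∏ j, (X (Sum.inr (i, j)) : MvPolynomial ((Fin s ⊕ Fin r) ⊕ (Fin s × Fin r)) K)
            ^ (d i j * (A i / d i j) * (B j / d i j)))
        * ∏ i, X (Sum.inl (Sum.inl i)) ^ A i := by
    rw [map_prod]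
    simp only [map_pow, aeval_X, hgx, mul_pow, ← Finset.prod_pow, ← pow_mul, key1]
    rw [Finset.prod_mul_distrib, mul_comm]
  have hy : aeval g (∏ j, (X (Sum.inr j) : MvPolynomial (Fin s ⊕ Fin r) K) ^ B j)
      = (∏ i, ∏ j, (X (Sum.inr (i, j)) : MvPolynomial ((Fin s ⊕ Fin r) ⊕ (Fin s × Fin r)) K)
            ^ (d i j * (A i / d i j) * (B j / d i j)))
        * ∏ j, X (Sum.inl (Sum.inr j)) ^ B j := by
    rw [map_prod]
    simp only [map_pow, aeval_X, hgy, mul_pow, ← Finset.prod_pow, ← pow_mul, key2]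
    rw [Finset.prod_mul_distrib, mul_comm, Finset.prod_comm]
  rw [map_sub, map_mul, hx, hy, aeval_C]
  ring_nf
  rw [algebraMap_eq]
  ring
end
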